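/- arXiv:0708.1043 — 2 statements merged into one kernel-verified Lean document; each statement's English description precedes it below -/
import Mathlib

section
/- With a(μ)=1 and d(μ) = Π_{m=1}^{M} sinh(μ-ξ_m)/sinh(μ-ξ_m+η), if parameters λ_1,...,λ_N satisfy the Bethe equations (-1)^{N+1} = d(λ_j) Π_{k≠j} [sinh(λ_j-λ_k+η) sinh(λ_k-λ_j)] / [sinh(λ_j-λ_k) sinh(λ_k-λ_j+η)] for all j, then the function τ(μ) = Π_{j=1}^{N} sinh(λ_j-μ+η)/sinh(λ_j-μ) + (-1)^{N+1} d(μ) Π_{j=1}^{N} sinh(μ-λ_j+η)/sinh(μ-λ_j) has no pole at μ = λ_j for each j; i.e., the residue of τ at μ = λ_j vanishes. -/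
/-!
Near `μ = λ_j` only the `j`-th factors of the two products in `τ` are singular, and
`sinh (λ_j - μ) = -sinh (μ - λ_j)`, so `τ μ = g μ / sinh (μ - λ_j)` with `g` continuous at `λ_j`.
Since `(μ - λ_j) / sinh (μ - λ_j) → 1`, the residue is `g λ_j`. Up to the factor `sinh η` this is
`(-1)^(N+1) d(λ_j) P₂(λ_j) - P₁(λ_j)`, where `P₁`, `P₂` are the two products with the `j`-th factor
removed, and the Bethe equation at `λ_j` says `(-1)^(N+1) = d(λ_j) P₂(λ_j) / P₁(λ_j)`;
multiplying it by `(-1)^(N+1)` makes the residue vanish.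
-/

open BigOperators Finset
open Filter Topology Complex

theorem tendsto_sub_div_sinh_sub (a : ℂ) :
    Tendsto (fun μ => (μ - a) / sinh (μ - a)) (𝓝[≠] a) (𝓝 1) := by
  have hderiv : HasDerivAt (fun μ => sinh (μ - a)) 1 a := by
    simpa using (hasDerivAt_sinh (a - a)).comp_sub_const a a
  have hslope := hderiv.tendsto_slope.inv₀ one_ne_zero
  simpa only [slope_def_field, sub_self, sinh_zero, sub_zero, inv_div, inv_one] using hslope

theorem tendsto_sub_mul_div_sinh_sub {f : ℂ → ℂ} {a : ℂ} (hf : ContinuousAt f a) :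
    Tendsto (fun μ => (μ - a) * (f μ / sinh (μ - a))) (𝓝[≠] a) (𝓝 (f a)) := by
  have h := (tendsto_sub_div_sinh_sub a).mul (hf.tendsto.mono_left nhdsWithin_le_nhds)
  rw [one_mul] at h
  refine h.congr fun μ => ?_
  ring

theorem continuousAt_prod_sinh_div {ι : Type*} {s : Finset ι} {p q : ι → ℂ → ℂ} {a : ℂ}
    (hp : ∀ k ∈ s, ContinuousAt (p k) a) (hq : ∀ k ∈ s, ContinuousAt (q k) a)
    (hne : ∀ k ∈ s, sinh (q k a) ≠ 0) :
    ContinuousAt (fun μ => ∏ k ∈ s, sinh (p k μ) / sinh (q k μ)) a :=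
  tendsto_finsetProd s fun k hk =>
    ((continuous_sinh.continuousAt.comp (hp k hk)).div
      (continuous_sinh.continuousAt.comp (hq k hk)) (hne k hk))

theorem mul_eq_of_eq_div_of_mul_self_eq_one {G₀ : Type*} [GroupWithZero G₀] {c x y : G₀}
    (h : c = x / y) (hc : c * c = 1) : c * x = y := by
  have hy : y ≠ 0 := by
    rintro rfl
    simp [h] at hc
  rw [eq_div_iff hy] at h
  rw [← h, ← mul_assoc, hc, one_mul]

theorem tau_no_pole_general (M N : ℕ) (η : ℂ) (ξ : Fin M → ℂ) (lam : Fin N → ℂ)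
    (hll : ∀ j k : Fin N, j ≠ k → Complex.sinh (lam j - lam k) ≠ 0)
    (hlξ : ∀ (j : Fin N) (m : Fin M),
      Complex.sinh (lam j - ξ m) ≠ 0 ∧ Complex.sinh (lam j - ξ m + η) ≠ 0)
    (d : ℂ → ℂ)
    (hd : ∀ μ, d μ = ∏ m, Complex.sinh (μ - ξ m) / Complex.sinh (μ - ξ m + η))
    (hBethe : ∀ j : Fin N, ((-1 : ℂ)) ^ (N + 1) =
      d (lam j) * ∏ k ∈ Finset.univ.erase j,
        (Complex.sinh (lam j - lam k + η) * Complex.sinh (lam k - lam j)) /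
          (Complex.sinh (lam j - lam k) * Complex.sinh (lam k - lam j + η)))
    (τ : ℂ → ℂ)
    (hτ : ∀ μ, τ μ =
      (∏ j, Complex.sinh (lam j - μ + η) / Complex.sinh (lam j - μ)) +
      ((-1 : ℂ)) ^ (N + 1) * d μ *
        ∏ j, Complex.sinh (μ - lam j + η) / Complex.sinh (μ - lam j))
    (j : Fin N) :
    Filter.Tendsto (fun μ => (μ - lam j) * τ μ)
      (nhdsWithin (lam j) {lam j}ᶜ) (nhds 0) := by
  set a := lam j
  set c : ℂ := (-1) ^ (N + 1)
  set P₁ : ℂ → ℂ := fun μ => ∏ k ∈ univ.erase j, sinh (lam k - μ + η) / sinh (lam k - μ)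
  set P₂ : ℂ → ℂ := fun μ => ∏ k ∈ univ.erase j, sinh (μ - lam k + η) / sinh (μ - lam k)
  set g : ℂ → ℂ := fun μ => c * d μ * (sinh (μ - a + η) * P₂ μ) - sinh (a - μ + η) * P₁ μ
  have hτg : ∀ μ, τ μ = g μ / sinh (μ - a) := fun μ => by
    rw [hτ μ, ← mul_prod_erase _ _ (mem_univ j), ← mul_prod_erase _ _ (mem_univ j),
      ← neg_sub μ a, sinh_neg, neg_sub, div_neg]
    ring
  have hg : ContinuousAt g a := by
    have hP₁ : ContinuousAt P₁ a := continuousAt_prod_sinh_div (by fun_prop) (by fun_prop)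
      fun k hk => hll k j (ne_of_mem_erase hk)
    have hP₂ : ContinuousAt P₂ a := continuousAt_prod_sinh_div (by fun_prop) (by fun_prop)
      fun k hk => hll j k (ne_of_mem_erase hk).symm
    have hdcont : ContinuousAt d a := by
      rw [funext hd]
      exact continuousAt_prod_sinh_div (by fun_prop) (by fun_prop) fun m _ => (hlξ j m).2
    fun_prop
  have hBethe' : c = d a * P₂ a / P₁ a := by
    rw [hBethe j, mul_div_assoc, ← prod_div_distrib]
    simp only [div_div_div_eq]
    rfl
  have hga : g a = 0 := by
    have hc : c * c = 1 := by rw [← pow_add, ← two_mul, pow_mul]; norm_num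
    have hcancel := mul_eq_of_eq_div_of_mul_self_eq_one hBethe' hc
    simp only [g, sub_self, zero_add]
    linear_combination sinh η * hcancel
  rw [← hga]
  exact (tendsto_sub_mul_div_sinh_sub hg).congr fun μ => by rw [hτg]

/-- If the Bethe equations hold, the transfer matrix eigenvalue τ(μ) has no pole
    at μ = λ_j: the residue (μ - λ_j) τ(μ) tends to 0 as μ → λ_j. -/
theorem tau_no_pole (M N : ℕ) (η : ℂ) (ξ : Fin M → ℂ) (lam : Fin N → ℂ)
    (hinj : Function.Injective lam)
    (hη : Complex.sinh η ≠ 0)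
    (hll : ∀ j k : Fin N, j ≠ k → Complex.sinh (lam j - lam k) ≠ 0)
    (hllη : ∀ j k : Fin N, j ≠ k → Complex.sinh (lam j - lam k + η) ≠ 0)
    (hlξ : ∀ (j : Fin N) (m : Fin M),
      Complex.sinh (lam j - ξ m) ≠ 0 ∧ Complex.sinh (lam j - ξ m + η) ≠ 0)
    (d : ℂ → ℂ)
    (hd : ∀ μ, d μ = ∏ m, Complex.sinh (μ - ξ m) / Complex.sinh (μ - ξ m + η))
    (hBethe : ∀ j : Fin N, ((-1 : ℂ)) ^ (N + 1) =
      d (lam j) * ∏ k ∈ Finset.univ.erase j,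
        (Complex.sinh (lam j - lam k + η) * Complex.sinh (lam k - lam j)) /
          (Complex.sinh (lam j - lam k) * Complex.sinh (lam k - lam j + η)))
    (τ : ℂ → ℂ)
    (hτ : ∀ μ, τ μ =
      (∏ j, Complex.sinh (lam j - μ + η) / Complex.sinh (lam j - μ)) +
      ((-1 : ℂ)) ^ (N + 1) * d μ *
        ∏ j, Complex.sinh (μ - lam j + η) / Complex.sinh (μ - lam j))
    (j : Fin N) :
    Filter.Tendsto (fun μ => (μ - lam j) * τ μ)
      (nhdsWithin (lam j) {lam j}ᶜ) (nhds 0) :=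
  tau_no_pole_general M N η ξ lam hll hlξ d hd hBethe τ hτ j
end

section
/- If e^{ik} = φ(λ) = sinh(λ - iπ/4)/sinh(λ + iπ/4) for real λ and k, then cos k = -1/cosh(2λ). -/
/-!
Write `w = sinh (λ + iπ/4)`. For real `λ` the numerator `sinh (λ - iπ/4)` is `conj w`, so
`e^{ik} = conj w / w` and `cos k = Re (conj w / w) = (Re w² - Im w²) / |w|²`.
Since `w = (sinh λ + i cosh λ) / √2`, this is
`(sinh² λ - cosh² λ) / (sinh² λ + cosh² λ) = -1 / cosh (2λ)`.
-/

open Complex ComplexConjugate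

namespace Complex

theorem re_conj_div_self (w : ℂ) : (conj w / w).re = (w.re ^ 2 - w.im ^ 2) / normSq w := by
  rw [div_re, conj_re, conj_im]
  ring

theorem sinh_ofReal_sub_ofReal_mul_I (x y : ℝ) :
    sinh (x - y * I) = conj (sinh (x + y * I)) := by
  rw [← sinh_conj, map_add, map_mul, conj_ofReal, conj_ofReal, conj_I, mul_neg,
    ← sub_eq_add_neg]

theorem sinh_ofReal_add_ofReal_mul_I_re (x y : ℝ) :
    (sinh (x + y * I)).re = Real.sinh x * Real.cos y := by
  rw [sinh_add, sinh_mul_I, cosh_mul_I, ← ofReal_sinh, ← ofReal_cosh, ← ofReal_cos,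
    ← ofReal_sin]
  simp only [add_re, mul_re, mul_im, ofReal_re, ofReal_im, I_re, I_im]
  ring

theorem sinh_ofReal_add_ofReal_mul_I_im (x y : ℝ) :
    (sinh (x + y * I)).im = Real.cosh x * Real.sin y := by
  rw [sinh_add, sinh_mul_I, cosh_mul_I, ← ofReal_sinh, ← ofReal_cosh, ← ofReal_cos,
    ← ofReal_sin]
  simp only [add_im, mul_re, mul_im, ofReal_re, ofReal_im, I_re, I_im]
  ring

end Complex

/-- If e^{ik} = sinh(λ - iπ/4)/sinh(λ + iπ/4) for real λ, k, then
    cos k = -1/cosh(2λ). -/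
theorem cos_of_phi (lam k : ℝ)
    (h : Complex.exp (Complex.I * k) =
        Complex.sinh ((lam : ℂ) - Complex.I * Real.pi / 4) /
          Complex.sinh ((lam : ℂ) + Complex.I * Real.pi / 4)) :
    Real.cos k = -1 / Real.cosh (2 * lam) := by
  have hI : I * Real.pi / 4 = ((Real.pi / 4 : ℝ) : ℂ) * I := by push_cast; ring
  set w := sinh (lam + ((Real.pi / 4 : ℝ) : ℂ) * I) with hw
  rw [hI, sinh_ofReal_sub_ofReal_mul_I, ← hw] at h
  calc Real.cos k = (conj w / w).re := by rw [← exp_ofReal_mul_I_re, mul_comm, h]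
    _ = (Real.sinh lam ^ 2 - Real.cosh lam ^ 2) / (Real.sinh lam ^ 2 + Real.cosh lam ^ 2) := by
      rw [re_conj_div_self, normSq_apply, hw, sinh_ofReal_add_ofReal_mul_I_re,
        sinh_ofReal_add_ofReal_mul_I_im, Real.cos_pi_div_four, Real.sin_pi_div_four]
      field_simp
    _ = -1 / Real.cosh (2 * lam) := by
      rw [Real.cosh_two_mul, Real.cosh_sq]
      ring
end
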